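/- arXiv:0706.1399 — 10 statements merged into one kernel-verified Lean document; each statement's English description precedes it below -/
import Mathlib

section
/- Fix channel gains h₁, h₂ > 0, peak power constraints P̃₁, P̃₂ > 0 and rates r₁, r₂ ≥ 0. There exist powers P₁ ∈ [0, P̃₁] and P₂ ∈ [0, P̃₂] such that (r₁, r₂) is decodable under decoding order (1,2) if and only if h₁^2 · P̃₁ ≥ (2^{r₁} − 1) · 2^{r₂} and h₂^2 · P̃₂ ≥ 2^{r₂} − 1. Symmetrically, there exist powers P₁ ∈ [0, P̃₁] and P₂ ∈ [0, P̃₂] such that (r₁, r₂) is decodable under decoding order (2,1) if and only if h₂^2 · P̃₂ ≥ (2^{r₂} − 1) · 2^{r₁} and h₁^2 · P̃₁ ≥ 2^{r₁} − 1. -/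
open Real

/-- Rate pair `(r₁, r₂)` is decodable in the two-user Gaussian MAC with gains `h₁, h₂`,
powers `P₁, P₂` and unit-variance noise, under decoding order (1,2). -/
def macDec12 (h₁ h₂ P₁ P₂ r₁ r₂ : ℝ) : Prop :=
  Real.logb 2 (1 + h₁ ^ 2 * P₁ / (1 + h₂ ^ 2 * P₂)) ≥ r₁ ∧
    Real.logb 2 (1 + h₂ ^ 2 * P₂) ≥ r₂

/-- Decodability under decoding order (2,1). -/
def macDec21 (h₁ h₂ P₁ P₂ r₁ r₂ : ℝ) : Prop :=
  Real.logb 2 (1 + h₂ ^ 2 * P₂ / (1 + h₁ ^ 2 * P₁)) ≥ r₂ ∧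
    Real.logb 2 (1 + h₁ ^ 2 * P₁) ≥ r₁

lemma mac_aux
    (h₁ h₂ Pp₁ Pp₂ r₁ r₂ : ℝ)
    (hh₁ : 0 < h₁) (hh₂ : 0 < h₂) (hP₁ : 0 < Pp₁) (hP₂ : 0 < Pp₂)
    (hr₁ : 0 ≤ r₁) (hr₂ : 0 ≤ r₂) :
    (∃ P₁ ∈ Set.Icc 0 Pp₁, ∃ P₂ ∈ Set.Icc 0 Pp₂, macDec12 h₁ h₂ P₁ P₂ r₁ r₂) ↔
      (h₁ ^ 2 * Pp₁ ≥ ((2 : ℝ) ^ r₁ - 1) * (2 : ℝ) ^ r₂ ∧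
        h₂ ^ 2 * Pp₂ ≥ (2 : ℝ) ^ r₂ - 1) := by
  have h2 : (1 : ℝ) < 2 := one_lt_two
  have e1 : (1 : ℝ) ≤ (2 : ℝ) ^ r₁ := Real.one_le_rpow h2.le hr₁
  have e2 : (1 : ℝ) ≤ (2 : ℝ) ^ r₂ := Real.one_le_rpow h2.le hr₂
  have p2 : (0 : ℝ) < (2 : ℝ) ^ r₂ := lt_of_lt_of_le one_pos e2
  constructor
  · rintro ⟨P₁, ⟨hP₁0, hP₁u⟩, P₂, ⟨hP₂0, hP₂u⟩, hd1, hd2⟩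
    have hg1 : 0 ≤ h₁ ^ 2 * P₁ := mul_nonneg (sq_nonneg _) hP₁0
    have hg2 : 0 ≤ h₂ ^ 2 * P₂ := mul_nonneg (sq_nonneg _) hP₂0
    have hden : (0 : ℝ) < 1 + h₂ ^ 2 * P₂ := by linarith
    have hx2 : (2 : ℝ) ^ r₂ ≤ 1 + h₂ ^ 2 * P₂ :=
      (Real.le_logb_iff_rpow_le h2 hden).mp hd2
    have hx1 : (2 : ℝ) ^ r₁ ≤ 1 + h₁ ^ 2 * P₁ / (1 + h₂ ^ 2 * P₂) := by
      have hpos : (0 : ℝ) < 1 + h₁ ^ 2 * P₁ / (1 + h₂ ^ 2 * P₂) := by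
        have := div_nonneg hg1 hden.le; linarith
      exact (Real.le_logb_iff_rpow_le h2 hpos).mp hd1
    have hkey : ((2 : ℝ) ^ r₁ - 1) * (1 + h₂ ^ 2 * P₂) ≤ h₁ ^ 2 * P₁ := by
      have := (le_div_iff₀ hden).mp (by linarith : (2 : ℝ) ^ r₁ - 1 ≤ h₁ ^ 2 * P₁ / (1 + h₂ ^ 2 * P₂))
      linarith [this]
    constructor
    · have h1 : ((2 : ℝ) ^ r₁ - 1) * (2 : ℝ) ^ r₂ ≤ ((2 : ℝ) ^ r₁ - 1) * (1 + h₂ ^ 2 * P₂) :=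
        mul_le_mul_of_nonneg_left hx2 (by linarith)
      have h3 : h₁ ^ 2 * P₁ ≤ h₁ ^ 2 * Pp₁ := mul_le_mul_of_nonneg_left hP₁u (sq_nonneg _)
      linarith
    · have h3 : h₂ ^ 2 * P₂ ≤ h₂ ^ 2 * Pp₂ := mul_le_mul_of_nonneg_left hP₂u (sq_nonneg _)
      linarith
  · rintro ⟨hA, hB⟩
    have hsq₁ : (0 : ℝ) < h₁ ^ 2 := pow_pos hh₁ 2
    have hsq₂ : (0 : ℝ) < h₂ ^ 2 := pow_pos hh₂ 2
    refine ⟨((2 : ℝ) ^ r₁ - 1) * (2 : ℝ) ^ r₂ / h₁ ^ 2,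
      ⟨div_nonneg (mul_nonneg (by linarith) p2.le) hsq₁.le,
        (div_le_iff₀ hsq₁).mpr (by linarith [mul_comm (h₁ ^ 2) Pp₁])⟩,
      ((2 : ℝ) ^ r₂ - 1) / h₂ ^ 2,
      ⟨div_nonneg (by linarith) hsq₂.le,
        (div_le_iff₀ hsq₂).mpr (by linarith [mul_comm (h₂ ^ 2) Pp₂])⟩, ?_, ?_⟩
    · have hv2 : h₂ ^ 2 * (((2 : ℝ) ^ r₂ - 1) / h₂ ^ 2) = (2 : ℝ) ^ r₂ - 1 := by
        field_simp
      have hv1 : h₁ ^ 2 * (((2 : ℝ) ^ r₁ - 1) * (2 : ℝ) ^ r₂ / h₁ ^ 2)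
          = ((2 : ℝ) ^ r₁ - 1) * (2 : ℝ) ^ r₂ := by field_simp
      rw [hv1, hv2]
      have : (1 : ℝ) + ((2 : ℝ) ^ r₂ - 1) = (2 : ℝ) ^ r₂ := by ring
      rw [this, mul_div_assoc, div_self p2.ne', mul_one]
      have : (1 : ℝ) + ((2 : ℝ) ^ r₁ - 1) = (2 : ℝ) ^ r₁ := by ring
      rw [this, Real.logb_rpow (by norm_num) (by norm_num)]
    · have hv2 : h₂ ^ 2 * (((2 : ℝ) ^ r₂ - 1) / h₂ ^ 2) = (2 : ℝ) ^ r₂ - 1 := by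
        field_simp
      rw [hv2]
      have : (1 : ℝ) + ((2 : ℝ) ^ r₂ - 1) = (2 : ℝ) ^ r₂ := by ring
      rw [this, Real.logb_rpow (by norm_num) (by norm_num)]

theorem mac_peak_power_supported_rates
    (h₁ h₂ Pp₁ Pp₂ r₁ r₂ : ℝ)
    (hh₁ : 0 < h₁) (hh₂ : 0 < h₂) (hP₁ : 0 < Pp₁) (hP₂ : 0 < Pp₂)
    (hr₁ : 0 ≤ r₁) (hr₂ : 0 ≤ r₂) :
    ((∃ P₁ ∈ Set.Icc 0 Pp₁, ∃ P₂ ∈ Set.Icc 0 Pp₂, macDec12 h₁ h₂ P₁ P₂ r₁ r₂) ↔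
      (h₁ ^ 2 * Pp₁ ≥ ((2 : ℝ) ^ r₁ - 1) * (2 : ℝ) ^ r₂ ∧
        h₂ ^ 2 * Pp₂ ≥ (2 : ℝ) ^ r₂ - 1)) ∧
    ((∃ P₁ ∈ Set.Icc 0 Pp₁, ∃ P₂ ∈ Set.Icc 0 Pp₂, macDec21 h₁ h₂ P₁ P₂ r₁ r₂) ↔
      (h₂ ^ 2 * Pp₂ ≥ ((2 : ℝ) ^ r₂ - 1) * (2 : ℝ) ^ r₁ ∧
        h₁ ^ 2 * Pp₁ ≥ (2 : ℝ) ^ r₁ - 1)) := by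
  refine ⟨mac_aux h₁ h₂ Pp₁ Pp₂ r₁ r₂ hh₁ hh₂ hP₁ hP₂ hr₁ hr₂, ?_⟩
  have := mac_aux h₂ h₁ Pp₂ Pp₁ r₂ r₁ hh₂ hh₁ hP₂ hP₁ hr₂ hr₁
  rw [← this]
  constructor
  · rintro ⟨P₁, hP1, P₂, hP2, hd⟩
    exact ⟨P₂, hP2, P₁, hP1, hd.1, hd.2⟩
  · rintro ⟨P₂, hP2, P₁, hP1, hd⟩
    exact ⟨P₁, hP1, P₂, hP2, hd.1, hd.2⟩
end

section
/- Fix channel gains h₁, h₂ > 0 and rates r₁, r₂ ≥ 0, and set P₁* = 2^{r₂}·(2^{r₁} − 1)/h₁^2 and P₂* = (2^{r₂} − 1)/h₂^2. Then (i) logb 2 (1 + h₂^2·P₂*) = r₂ and logb 2 (1 + h₁^2·P₁*/(1 + h₂^2·P₂*)) = r₁, so (r₁, r₂) is decodable with powers (P₁*, P₂*) under decoding order (1,2); and (ii) for any powers P₁, P₂ ≥ 0 with which (r₁, r₂) is decodable under decoding order (1,2), one has P₁ ≥ P₁* and P₂ ≥ P₂*. -/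
open Real

theorem mac_min_powers_order12
    (h₁ h₂ r₁ r₂ : ℝ) (hh₁ : 0 < h₁) (hh₂ : 0 < h₂) (hr₁ : 0 ≤ r₁) (hr₂ : 0 ≤ r₂) :
    (Real.logb 2 (1 + h₂ ^ 2 * (((2 : ℝ) ^ r₂ - 1) / h₂ ^ 2)) = r₂ ∧
      Real.logb 2 (1 + h₁ ^ 2 * ((2 : ℝ) ^ r₂ * ((2 : ℝ) ^ r₁ - 1) / h₁ ^ 2) /
        (1 + h₂ ^ 2 * (((2 : ℝ) ^ r₂ - 1) / h₂ ^ 2))) = r₁ ∧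
      macDec12 h₁ h₂ ((2 : ℝ) ^ r₂ * ((2 : ℝ) ^ r₁ - 1) / h₁ ^ 2)
        (((2 : ℝ) ^ r₂ - 1) / h₂ ^ 2) r₁ r₂) ∧
    (∀ P₁ P₂ : ℝ, 0 ≤ P₁ → 0 ≤ P₂ → macDec12 h₁ h₂ P₁ P₂ r₁ r₂ →
      (2 : ℝ) ^ r₂ * ((2 : ℝ) ^ r₁ - 1) / h₁ ^ 2 ≤ P₁ ∧
        ((2 : ℝ) ^ r₂ - 1) / h₂ ^ 2 ≤ P₂) := by
  have h2pos : (0:ℝ) < 2 := by norm_num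
  have hne₁ : h₁ ^ 2 ≠ 0 := by positivity
  have hne₂ : h₂ ^ 2 ≠ 0 := by positivity
  have hp₂ : (0:ℝ) < (2:ℝ) ^ r₂ := Real.rpow_pos_of_pos h2pos r₂
  have e₂ : (1 : ℝ) + h₂ ^ 2 * (((2:ℝ) ^ r₂ - 1) / h₂ ^ 2) = (2:ℝ) ^ r₂ := by
    field_simp
    ring
  have e₁ : (1 : ℝ) + h₁ ^ 2 * ((2:ℝ) ^ r₂ * ((2:ℝ) ^ r₁ - 1) / h₁ ^ 2) /
      (1 + h₂ ^ 2 * (((2:ℝ) ^ r₂ - 1) / h₂ ^ 2)) = (2:ℝ) ^ r₁ := by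
    rw [e₂]
    field_simp
    ring
  have l₂ : Real.logb 2 (1 + h₂ ^ 2 * (((2:ℝ) ^ r₂ - 1) / h₂ ^ 2)) = r₂ := by
    rw [e₂, Real.logb_rpow h2pos (by norm_num)]
  have l₁ : Real.logb 2 (1 + h₁ ^ 2 * ((2:ℝ) ^ r₂ * ((2:ℝ) ^ r₁ - 1) / h₁ ^ 2) /
      (1 + h₂ ^ 2 * (((2:ℝ) ^ r₂ - 1) / h₂ ^ 2))) = r₁ := by
    rw [e₁, Real.logb_rpow h2pos (by norm_num)]
  refine ⟨⟨l₂, l₁, le_of_eq l₁.symm, le_of_eq l₂.symm⟩, ?_⟩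
  intro P₁ P₂ hP₁ hP₂ ⟨hA, hB⟩
  have hD : (0:ℝ) < 1 + h₂ ^ 2 * P₂ := by positivity
  have hB' : (2:ℝ) ^ r₂ ≤ 1 + h₂ ^ 2 * P₂ := by
    calc (2:ℝ) ^ r₂ ≤ (2:ℝ) ^ Real.logb 2 (1 + h₂ ^ 2 * P₂) := by
          exact Real.rpow_le_rpow_of_exponent_le (by norm_num) hB
      _ = 1 + h₂ ^ 2 * P₂ := Real.rpow_logb h2pos (by norm_num) hD
  have hE : (0:ℝ) < 1 + h₁ ^ 2 * P₁ / (1 + h₂ ^ 2 * P₂) := by positivity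
  have hA' : (2:ℝ) ^ r₁ ≤ 1 + h₁ ^ 2 * P₁ / (1 + h₂ ^ 2 * P₂) := by
    calc (2:ℝ) ^ r₁ ≤ (2:ℝ) ^ Real.logb 2 (1 + h₁ ^ 2 * P₁ / (1 + h₂ ^ 2 * P₂)) := by
          exact Real.rpow_le_rpow_of_exponent_le (by norm_num) hA
      _ = _ := Real.rpow_logb h2pos (by norm_num) hE
  have h1r : (1:ℝ) ≤ (2:ℝ) ^ r₁ := Real.one_le_rpow (by norm_num) hr₁
  have hA'' : ((2:ℝ) ^ r₁ - 1) * (1 + h₂ ^ 2 * P₂) ≤ h₁ ^ 2 * P₁ := by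
    have := mul_le_mul_of_nonneg_right hA' (le_of_lt hD)
    rw [add_mul, div_mul_cancel₀ _ hD.ne'] at this
    nlinarith
  constructor
  · rw [div_le_iff₀ (by positivity : (0:ℝ) < h₁ ^ 2)]
    calc (2:ℝ) ^ r₂ * ((2:ℝ) ^ r₁ - 1) ≤ ((2:ℝ) ^ r₁ - 1) * (1 + h₂ ^ 2 * P₂) := by
          nlinarith
      _ ≤ h₁ ^ 2 * P₁ := hA''
      _ = P₁ * h₁ ^ 2 := by ring
  · rw [div_le_iff₀ (by positivity : (0:ℝ) < h₂ ^ 2)]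
    nlinarith
end

section
/- For all real numbers h₁ ≥ h₂ > 0 and r₁, r₂ ≥ 0, the minimum total transmit power needed to support (r₁, r₂) in the multiple access channel with the stronger user decoded first is no larger than with the weaker user decoded first: (2^{r₁} − 1)·2^{r₂}/h₁^2 + (2^{r₂} − 1)/h₂^2 ≤ (2^{r₁} − 1)/h₁^2 + (2^{r₂} − 1)·2^{r₁}/h₂^2. -/
/-- The minimum total transmit power needed to support rates `(r₁, r₂)` in the two-user
Gaussian MAC with the stronger user (user 1, with `h₁ ≥ h₂`) decoded first is no larger
than with the weaker user decoded first. -/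
theorem mac_decode_stronger_first_saves_power
    (h₁ h₂ r₁ r₂ : ℝ) (hh₂ : 0 < h₂) (hh : h₂ ≤ h₁) (hr₁ : 0 ≤ r₁) (hr₂ : 0 ≤ r₂) :
    ((2 : ℝ) ^ r₁ - 1) * (2 : ℝ) ^ r₂ / h₁ ^ 2 + ((2 : ℝ) ^ r₂ - 1) / h₂ ^ 2 ≤
      ((2 : ℝ) ^ r₁ - 1) / h₁ ^ 2 + ((2 : ℝ) ^ r₂ - 1) * (2 : ℝ) ^ r₁ / h₂ ^ 2 := by
  have h1 : (0:ℝ) < h₁ := lt_of_lt_of_le hh₂ hh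
  have ha : (1:ℝ) ≤ (2 : ℝ) ^ r₁ := Real.one_le_rpow one_le_two hr₁
  have hb : (1:ℝ) ≤ (2 : ℝ) ^ r₂ := Real.one_le_rpow one_le_two hr₂
  rw [div_add_div _ _ (by positivity) (by positivity),
      div_add_div _ _ (by positivity) (by positivity),
      div_le_div_iff₀ (by positivity) (by positivity)]
  nlinarith [mul_le_mul_of_nonneg_left (pow_le_pow_left₀ hh₂.le hh 2)
      (mul_nonneg (sub_nonneg.2 ha) (sub_nonneg.2 hb)), sq_nonneg h₁, sq_nonneg h₂,
      mul_pos (pow_pos h1 2) (pow_pos hh₂ 2)]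
end

section
/- Fix channel gains h₁ ≥ h₂ > 0, peak powers P̃₁, P̃₂ ≥ 0 and rates r₁, r₂ ≥ 0. If there exist powers P₁ ∈ [0, P̃₁] and P₂ ∈ [0, P̃₂] such that (r₁, r₂) is decodable in the multiple access channel under decoding order (1,2) or under decoding order (2,1), then there exist powers Q₁, Q₂ ≥ 0 with Q₁ + Q₂ ≤ P̃₁ + P̃₂ such that (r₁, r₂) is decodable in the broadcast channel with powers (Q₁, Q₂). -/
open Real

/-- Decodability in the two-user Gaussian broadcast channel with gains `h₁ ≥ h₂`. -/
def bcDec (h₁ h₂ P₁ P₂ r₁ r₂ : ℝ) : Prop :=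
  Real.logb 2 (1 + h₂ ^ 2 * P₂ / (1 + h₂ ^ 2 * P₁)) ≥ r₂ ∧
    Real.logb 2 (1 + h₁ ^ 2 * P₁) ≥ r₁

theorem mac_supported_implies_bc_supported
    (h₁ h₂ Pp₁ Pp₂ r₁ r₂ : ℝ) (hh₂ : 0 < h₂) (hh : h₂ ≤ h₁)
    (hPp₁ : 0 ≤ Pp₁) (hPp₂ : 0 ≤ Pp₂) (hr₁ : 0 ≤ r₁) (hr₂ : 0 ≤ r₂)
    (hmac : ∃ P₁ ∈ Set.Icc 0 Pp₁, ∃ P₂ ∈ Set.Icc 0 Pp₂,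
      macDec12 h₁ h₂ P₁ P₂ r₁ r₂ ∨ macDec21 h₁ h₂ P₁ P₂ r₁ r₂) :
    ∃ Q₁ Q₂ : ℝ, 0 ≤ Q₁ ∧ 0 ≤ Q₂ ∧ Q₁ + Q₂ ≤ Pp₁ + Pp₂ ∧ bcDec h₁ h₂ Q₁ Q₂ r₁ r₂ := by
  obtain ⟨P₁, ⟨hP₁0, hP₁⟩, P₂, ⟨hP₂0, hP₂⟩, hcase⟩ := hmac
  have hsum : P₁ + P₂ ≤ Pp₁ + Pp₂ := add_le_add hP₁ hP₂
  rcases hcase with ⟨h12a, h12b⟩ | ⟨h21a, h21b⟩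
  · -- decoding order (1,2): rescale powers
    have hd : (0:ℝ) < 1 + h₂ ^ 2 * P₂ := by positivity
    set Q₁ : ℝ := P₁ / (1 + h₂ ^ 2 * P₂) with hQ₁def
    set Q₂ : ℝ := P₂ * (1 + h₂ ^ 2 * Q₁) with hQ₂def
    have hQ₁0 : 0 ≤ Q₁ := by positivity
    have hQ₂0 : 0 ≤ Q₂ := by positivity
    have hdQ : (0:ℝ) < 1 + h₂ ^ 2 * Q₁ := by positivity
    refine ⟨Q₁, Q₂, hQ₁0, hQ₂0, ?_, ?_, ?_⟩
    · have : Q₁ + Q₂ = P₁ + P₂ := by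
        rw [hQ₂def, hQ₁def]; field_simp; ring
      linarith
    · have heq : h₂ ^ 2 * Q₂ / (1 + h₂ ^ 2 * Q₁) = h₂ ^ 2 * P₂ := by
        rw [hQ₂def]; field_simp
      rw [heq]; exact h12b
    · rw [hQ₁def, mul_div_assoc'] at *; exact h12a
  · -- decoding order (2,1): same powers work
    have hd1 : (0:ℝ) < 1 + h₂ ^ 2 * P₁ := by positivity
    have hd2 : (0:ℝ) < 1 + h₁ ^ 2 * P₁ := by positivity
    refine ⟨P₁, P₂, hP₁0, hP₂0, hsum, ?_, h21b⟩
    refine le_trans h21a ?_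
    apply Real.logb_le_logb_of_le one_lt_two (by positivity)
    have hfrac : h₂ ^ 2 * P₂ / (1 + h₁ ^ 2 * P₁) ≤ h₂ ^ 2 * P₂ / (1 + h₂ ^ 2 * P₁) := by
      apply div_le_div_of_nonneg_left (by positivity) hd1
      have : h₂ ^ 2 ≤ h₁ ^ 2 := by nlinarith
      nlinarith
    linarith
end

section
/- Fix channel gains h₁ ≥ h₂ > 0, a total power budget P̃ > 0 and rates r₁, r₂ ≥ 0. The following are equivalent: (a) there exist powers P₁, P₂ ≥ 0 with P₁ + P₂ ≤ P̃ such that (r₁, r₂) is decodable in the broadcast channel with powers (P₁, P₂); (b) there exist powers Q₁, Q₂ ≥ 0 with Q₁ + Q₂ ≤ P̃ such that (r₁, r₂) is decodable in the multiple access channel with powers (Q₁, Q₂) under decoding order (1,2). In other words, at every channel state a rate pair supported by the broadcast channel with total power P̃ is exactly a corner point of some dual multiple access channel whose powers sum to at most P̃, achieved by decoding the stronger user first. -/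
open Real

theorem bc_supported_iff_dual_mac_supported
    (h₁ h₂ Pp r₁ r₂ : ℝ) (hh₂ : 0 < h₂) (hh : h₂ ≤ h₁) (hPp : 0 < Pp)
    (hr₁ : 0 ≤ r₁) (hr₂ : 0 ≤ r₂) :
    (∃ P₁ P₂ : ℝ, 0 ≤ P₁ ∧ 0 ≤ P₂ ∧ P₁ + P₂ ≤ Pp ∧ bcDec h₁ h₂ P₁ P₂ r₁ r₂) ↔
      (∃ Q₁ Q₂ : ℝ, 0 ≤ Q₁ ∧ 0 ≤ Q₂ ∧ Q₁ + Q₂ ≤ Pp ∧ macDec12 h₁ h₂ Q₁ Q₂ r₁ r₂) := by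
  constructor
  · rintro ⟨P₁, P₂, hP₁, hP₂, hsum, hb2, hb1⟩
    have hd : (0:ℝ) < 1 + h₂ ^ 2 * P₁ := by positivity
    set Q₂ : ℝ := P₂ / (1 + h₂ ^ 2 * P₁) with hQ₂
    have hQ₂0 : 0 ≤ Q₂ := div_nonneg hP₂ hd.le
    set Q₁ : ℝ := P₁ * (1 + h₂ ^ 2 * Q₂) with hQ₁
    have hQ₁0 : 0 ≤ Q₁ := by positivity
    have hden : (0:ℝ) < 1 + h₂ ^ 2 * Q₂ := by positivity
    refine ⟨Q₁, Q₂, hQ₁0, hQ₂0, ?_, ?_, ?_⟩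
    · have : Q₁ + Q₂ = P₁ + P₂ := by
        rw [hQ₁, hQ₂]; field_simp; ring
      linarith
    · have harg : 1 + h₁ ^ 2 * Q₁ / (1 + h₂ ^ 2 * Q₂) = 1 + h₁ ^ 2 * P₁ := by
        rw [hQ₁]; field_simp
      rw [harg]; exact hb1
    · have harg : 1 + h₂ ^ 2 * Q₂ = 1 + h₂ ^ 2 * P₂ / (1 + h₂ ^ 2 * P₁) := by
        rw [hQ₂]; ring
      rw [harg]; exact hb2
  · rintro ⟨Q₁, Q₂, hQ₁, hQ₂, hsum, hm1, hm2⟩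
    have hd : (0:ℝ) < 1 + h₂ ^ 2 * Q₂ := by positivity
    set P₁ : ℝ := Q₁ / (1 + h₂ ^ 2 * Q₂) with hP₁
    have hP₁0 : 0 ≤ P₁ := div_nonneg hQ₁ hd.le
    set P₂ : ℝ := Q₂ * (1 + h₂ ^ 2 * P₁) with hP₂
    have hP₂0 : 0 ≤ P₂ := by positivity
    have hden : (0:ℝ) < 1 + h₂ ^ 2 * P₁ := by positivity
    refine ⟨P₁, P₂, hP₁0, hP₂0, ?_, ?_, ?_⟩
    · have : P₁ + P₂ = Q₁ + Q₂ := by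
        rw [hP₂, hP₁]; field_simp; ring
      linarith
    · have harg : 1 + h₂ ^ 2 * P₂ / (1 + h₂ ^ 2 * P₁) = 1 + h₂ ^ 2 * Q₂ := by
        rw [hP₂]; field_simp
      rw [harg]; exact hm2
    · have harg : 1 + h₁ ^ 2 * P₁ = 1 + h₁ ^ 2 * Q₁ / (1 + h₂ ^ 2 * Q₂) := by
        rw [hP₁]; ring
      rw [harg]; exact hm1
end

section
/- (Characterization of the channel state S₄ of the fixed-codebook MAC.) Fix channel gains h₁, h₂ > 0, peak powers P̃₁, P̃₂ > 0 and a codebook rate R₀ ≥ 0. There exist powers P₁ ∈ [0, P̃₁], P₂ ∈ [0, P̃₂] and a decoding order ((1,2) or (2,1)) with which (R₀, R₀) is decodable in the multiple access channel if and only if h₁^2·P̃₁ ≥ 2^{R₀} − 1, h₂^2·P̃₂ ≥ 2^{R₀} − 1, and ( h₁^2·P̃₁ ≥ 2^{R₀}·(2^{R₀} − 1) or h₂^2·P̃₂ ≥ 2^{R₀}·(2^{R₀} − 1) ). -/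
open Real

/-- Characterization of the channel state `S₄` of the fixed-codebook MAC with peak
power constraints: `(R₀, R₀)` is decodable with some admissible powers and some
decoding order iff both individual-rate conditions hold and at least one of the two
simultaneous-transmission conditions holds. -/
theorem mac_fixed_codebook_state_S4
    (h₁ h₂ Pp₁ Pp₂ R₀ : ℝ) (hh₁ : 0 < h₁) (hh₂ : 0 < h₂)
    (hPp₁ : 0 < Pp₁) (hPp₂ : 0 < Pp₂) (hR₀ : 0 ≤ R₀) :
    (∃ P₁ ∈ Set.Icc 0 Pp₁, ∃ P₂ ∈ Set.Icc 0 Pp₂,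
        macDec12 h₁ h₂ P₁ P₂ R₀ R₀ ∨ macDec21 h₁ h₂ P₁ P₂ R₀ R₀) ↔
      (h₁ ^ 2 * Pp₁ ≥ (2 : ℝ) ^ R₀ - 1 ∧ h₂ ^ 2 * Pp₂ ≥ (2 : ℝ) ^ R₀ - 1 ∧
        (h₁ ^ 2 * Pp₁ ≥ (2 : ℝ) ^ R₀ * ((2 : ℝ) ^ R₀ - 1) ∨
          h₂ ^ 2 * Pp₂ ≥ (2 : ℝ) ^ R₀ * ((2 : ℝ) ^ R₀ - 1))) := by
  set a : ℝ := (2:ℝ) ^ R₀ with ha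
  have ha1 : 1 ≤ a := Real.one_le_rpow (by norm_num) hR₀
  have ha0 : 0 < a := by linarith
  have key : ∀ x : ℝ, 0 ≤ x → (Real.logb 2 (1 + x) ≥ R₀ ↔ a ≤ 1 + x) := by
    intro x hx
    rw [ge_iff_le, Real.le_logb_iff_rpow_le (by norm_num) (by linarith)]
  constructor
  · rintro ⟨P₁, ⟨hP₁0, hP₁⟩, P₂, ⟨hP₂0, hP₂⟩, hdec⟩
    have hq₁ : (0:ℝ) ≤ h₁ ^ 2 * P₁ := by positivity
    have hq₂ : (0:ℝ) ≤ h₂ ^ 2 * P₂ := by positivity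
    have hm₁ : h₁ ^ 2 * P₁ ≤ h₁ ^ 2 * Pp₁ := by nlinarith
    have hm₂ : h₂ ^ 2 * P₂ ≤ h₂ ^ 2 * Pp₂ := by nlinarith
    rcases hdec with ⟨c1, c2⟩ | ⟨c1, c2⟩
    · have d2 : a ≤ 1 + h₂ ^ 2 * P₂ := (key _ hq₂).mp c2
      have hden : (0:ℝ) < 1 + h₂ ^ 2 * P₂ := by linarith
      have hquot : (0:ℝ) ≤ h₁ ^ 2 * P₁ / (1 + h₂ ^ 2 * P₂) := by positivity
      have d1 : a ≤ 1 + h₁ ^ 2 * P₁ / (1 + h₂ ^ 2 * P₂) := (key _ hquot).mp c1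
      have d1' : (a - 1) * (1 + h₂ ^ 2 * P₂) ≤ h₁ ^ 2 * P₁ := by
        rw [← le_div_iff₀ hden]; linarith
      have hprod : a * (a - 1) ≤ h₁ ^ 2 * P₁ := by nlinarith
      refine ⟨by nlinarith, by linarith, Or.inl (by linarith)⟩
    · have d2 : a ≤ 1 + h₁ ^ 2 * P₁ := (key _ hq₁).mp c2
      have hden : (0:ℝ) < 1 + h₁ ^ 2 * P₁ := by linarith
      have hquot : (0:ℝ) ≤ h₂ ^ 2 * P₂ / (1 + h₁ ^ 2 * P₁) := by positivity
      have d1 : a ≤ 1 + h₂ ^ 2 * P₂ / (1 + h₁ ^ 2 * P₁) := (key _ hquot).mp c1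
      have d1' : (a - 1) * (1 + h₁ ^ 2 * P₁) ≤ h₂ ^ 2 * P₂ := by
        rw [← le_div_iff₀ hden]; linarith
      have hprod : a * (a - 1) ≤ h₂ ^ 2 * P₂ := by nlinarith
      refine ⟨by linarith, by nlinarith, Or.inr (by linarith)⟩
  · rintro ⟨hA, hB, hC | hC⟩
    · refine ⟨Pp₁, ⟨le_of_lt hPp₁, le_refl _⟩, (a - 1) / h₂ ^ 2,
        ⟨div_nonneg (by linarith) (by positivity), ?_⟩, Or.inl ⟨?_, ?_⟩⟩
      · rw [div_le_iff₀ (by positivity)]; nlinarith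
      · have hP2 : h₂ ^ 2 * ((a - 1) / h₂ ^ 2) = a - 1 := by
          field_simp
        rw [hP2]
        have hden : (0:ℝ) < 1 + (a - 1) := by linarith
        have hquot : (0:ℝ) ≤ h₁ ^ 2 * Pp₁ / (1 + (a - 1)) := by positivity
        rw [key _ hquot]
        have : a - 1 ≤ h₁ ^ 2 * Pp₁ / (1 + (a - 1)) := by
          rw [le_div_iff₀ hden]; nlinarith
        linarith
      · have hP2 : h₂ ^ 2 * ((a - 1) / h₂ ^ 2) = a - 1 := by field_simp
        rw [hP2, key _ (by linarith)]; linarith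
    · refine ⟨(a - 1) / h₁ ^ 2, ⟨div_nonneg (by linarith) (by positivity), ?_⟩, Pp₂,
        ⟨le_of_lt hPp₂, le_refl _⟩, Or.inr ⟨?_, ?_⟩⟩
      · rw [div_le_iff₀ (by positivity)]; nlinarith
      · have hP1 : h₁ ^ 2 * ((a - 1) / h₁ ^ 2) = a - 1 := by field_simp
        rw [hP1]
        have hden : (0:ℝ) < 1 + (a - 1) := by linarith
        have hquot : (0:ℝ) ≤ h₂ ^ 2 * Pp₂ / (1 + (a - 1)) := by positivity
        rw [key _ hquot]
        have : a - 1 ≤ h₂ ^ 2 * Pp₂ / (1 + (a - 1)) := by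
          rw [le_div_iff₀ hden]; nlinarith
        linarith
      · have hP1 : h₁ ^ 2 * ((a - 1) / h₁ ^ 2) = a - 1 := by field_simp
        rw [hP1, key _ (by linarith)]; linarith
end

section
/- (A fixed power constraint is strictly weaker than a peak power constraint.) Let h₁ = h₂ = 1, P̃₁ = P̃₂ = 10 and R₀ = 1. Then (R₀, R₀) is not decodable in the multiple access channel with the fixed full powers P₁ = 10, P₂ = 10 under either decoding order (1,2) or (2,1), yet it is decodable with the reduced powers P₁ = 10, P₂ = 4 (which satisfy P₁ ≤ P̃₁ and P₂ ≤ P̃₂) under decoding order (1,2). Hence reducing the transmit power below the peak can make a rate vector achievable that full-power transmission cannot achieve. -/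
open Real

lemma lb_lt_one : Real.logb 2 ((21:ℝ)/11) < 1 := by
  have := Real.logb_lt_logb (b := 2) (by norm_num) (by norm_num : (0:ℝ) < 21/11) (by norm_num : (21:ℝ)/11 < 2)
  simpa using this

lemma lb_ge_one {x : ℝ} (hx : (2:ℝ) ≤ x) : (1:ℝ) ≤ Real.logb 2 x := by
  have := Real.logb_le_logb_of_le (b := 2) (by norm_num) (by norm_num) hx
  simpa using this

theorem mac_full_power_suboptimal' :
    ¬ macDec12 1 1 10 10 1 1 ∧ ¬ macDec21 1 1 10 10 1 1 ∧
      macDec12 1 1 10 4 1 1 ∧ (10 : ℝ) ≤ 10 ∧ (4 : ℝ) ≤ 10 := by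
  refine ⟨?_, ?_, ⟨?_, ?_⟩, le_refl _, by norm_num⟩
  · rintro ⟨h, -⟩
    have e : (1 : ℝ) + 1^2 * 10 / (1 + 1^2*10) = 21/11 := by norm_num
    rw [e] at h
    exact absurd h (not_le.mpr lb_lt_one)
  · rintro ⟨h, -⟩
    have e : (1 : ℝ) + 1^2 * 10 / (1 + 1^2*10) = 21/11 := by norm_num
    rw [e] at h
    exact absurd h (not_le.mpr lb_lt_one)
  · rw [ge_iff_le, show ((1:ℝ) + 1^2 * 10 / (1 + 1^2*4)) = 3 by norm_num]
    exact lb_ge_one (by norm_num)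
  · rw [ge_iff_le, show ((1:ℝ) + 1^2 * 4) = 5 by norm_num]
    exact lb_ge_one (by norm_num)

/-- With `h₁ = h₂ = 1`, peak powers `10` and rate `R₀ = 1`, the rate pair `(1, 1)` is
not decodable at full powers `(10, 10)` under either decoding order, but is decodable
at the reduced powers `(10, 4)` under decoding order (1,2). -/
theorem mac_full_power_suboptimal :
    ¬ macDec12 1 1 10 10 1 1 ∧ ¬ macDec21 1 1 10 10 1 1 ∧
      macDec12 1 1 10 4 1 1 ∧ (10 : ℝ) ≤ 10 ∧ (4 : ℝ) ≤ 10 := by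
  exact mac_full_power_suboptimal'
end

section
/- (The stability region of the fixed-codebook MAC with peak power constraints is a pentagon.) Let R₀ > 0 and let p₂, p₃, p₄, p₅ ≥ 0. In ℝ², the Minkowski sum p₂ • convexHull {(0,0), (R₀,0)} + p₃ • convexHull {(0,0), (0,R₀)} + p₄ • convexHull {(0,0), (R₀,0), (0,R₀), (R₀,R₀)} + p₅ • convexHull {(0,0), (R₀,0), (0,R₀)} equals the pentagon { (a, b) ∈ ℝ² : 0 ≤ a, 0 ≤ b, a ≤ (p₂ + p₄ + p₅)·R₀, b ≤ (p₃ + p₄ + p₅)·R₀, a + b ≤ (p₂ + p₃ + 2·p₄ + p₅)·R₀ }. -/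
open Pointwise

lemma hullH (R : ℝ) (hR : 0 ≤ R) :
    convexHull ℝ {((0:ℝ),(0:ℝ)), (R,0)} = Set.Icc 0 R ×ˢ ({0} : Set ℝ) := by
  have h : ({((0:ℝ),(0:ℝ)), (R,0)} : Set (ℝ×ℝ)) = ({0,R} : Set ℝ) ×ˢ ({0} : Set ℝ) := by
    ext ⟨x,y⟩; simp [Prod.ext_iff]; tauto
  rw [h, convexHull_prod, convexHull_pair, convexHull_singleton, segment_eq_Icc hR]

lemma hullV (R : ℝ) (hR : 0 ≤ R) :
    convexHull ℝ {((0:ℝ),(0:ℝ)), (0,R)} = ({0} : Set ℝ) ×ˢ Set.Icc 0 R := by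
  have h : ({((0:ℝ),(0:ℝ)), (0,R)} : Set (ℝ×ℝ)) = ({0} : Set ℝ) ×ˢ ({0,R} : Set ℝ) := by
    ext ⟨x,y⟩; simp [Prod.ext_iff]; tauto
  rw [h, convexHull_prod, convexHull_pair, convexHull_singleton, segment_eq_Icc hR]

lemma hullSq (R : ℝ) (hR : 0 ≤ R) :
    convexHull ℝ {((0:ℝ),(0:ℝ)), (R,0), (0,R), (R,R)} = Set.Icc 0 R ×ˢ Set.Icc 0 R := by
  have h : ({((0:ℝ),(0:ℝ)), (R,0), (0,R), (R,R)} : Set (ℝ×ℝ)) = ({0,R} : Set ℝ) ×ˢ ({0,R} : Set ℝ) := by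
    ext ⟨x,y⟩; simp [Prod.ext_iff]; tauto
  rw [h, convexHull_prod, convexHull_pair, segment_eq_Icc hR]

lemma hullTri (R : ℝ) (hR : 0 < R) :
    convexHull ℝ {((0:ℝ),(0:ℝ)), (R,0), (0,R)} =
      {q : ℝ × ℝ | 0 ≤ q.1 ∧ 0 ≤ q.2 ∧ q.1 + q.2 ≤ R} := by
  apply le_antisymm
  · apply convexHull_min
    · rintro q hq
      simp only [Set.mem_insert_iff, Set.mem_singleton_iff] at hq
      rcases hq with rfl | rfl | rfl <;> constructor <;> simp <;> linarith
    · rintro ⟨x1,y1⟩ ⟨hx1,hy1,hxy1⟩ ⟨x2,y2⟩ ⟨hx2,hy2,hxy2⟩ s t hs ht hst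
      refine ⟨?_, ?_, ?_⟩ <;> simp [Prod.smul_fst, Prod.smul_snd, smul_eq_mul] <;> nlinarith
  · rintro ⟨x,y⟩ ⟨hx, hy, hxy⟩
    have hmem : ∑ i : Fin 3, (![1 - (x+y)/R, x/R, y/R] i) • (![((0:ℝ),(0:ℝ)), (R,0), (0,R)] i) ∈
        convexHull ℝ {((0:ℝ),(0:ℝ)), (R,0), (0,R)} := by
      apply (convex_convexHull ℝ _).sum_mem
      · intro i _
        fin_cases i <;> simp <;>
          [ (rw [div_le_one hR]; linarith); positivity; positivity]
      · rw [Fin.sum_univ_three]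
        simp
        field_simp
        ring
      · intro i _
        fin_cases i <;> simp <;> apply subset_convexHull <;> simp
    convert hmem using 1
    rw [Fin.sum_univ_three]
    simp [Prod.ext_iff, smul_eq_mul]
    constructor <;> field_simp

lemma memH (p R : ℝ) (hp : 0 ≤ p) (hR : 0 < R) (q : ℝ × ℝ) :
    q ∈ p • convexHull ℝ {((0:ℝ),(0:ℝ)), (R,0)} ↔ 0 ≤ q.1 ∧ q.1 ≤ p*R ∧ q.2 = 0 := by
  rw [hullH R hR.le, Set.mem_smul_set]
  constructor
  · rintro ⟨⟨u,v⟩, ⟨⟨hu0,hu1⟩, hv⟩, rfl⟩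
    simp only [Set.mem_singleton_iff] at hv
    subst hv
    refine ⟨mul_nonneg hp hu0, mul_le_mul_of_nonneg_left hu1 hp, by simp⟩
  · rintro ⟨hx0, hx1, hy⟩
    rcases hp.eq_or_lt with rfl | hp'
    · have : q.1 = 0 := le_antisymm (by linarith) hx0
      exact ⟨(0,0), ⟨⟨le_refl _, hR.le⟩, rfl⟩, by
        ext <;> simp [this, hy]⟩
    · refine ⟨(q.1/p, 0), ⟨⟨by positivity, by rw [div_le_iff₀ hp']; linarith⟩, rfl⟩, ?_⟩
      ext <;> simp [smul_eq_mul, hy]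
      field_simp

lemma memV (p R : ℝ) (hp : 0 ≤ p) (hR : 0 < R) (q : ℝ × ℝ) :
    q ∈ p • convexHull ℝ {((0:ℝ),(0:ℝ)), (0,R)} ↔ 0 ≤ q.2 ∧ q.2 ≤ p*R ∧ q.1 = 0 := by
  rw [hullV R hR.le, Set.mem_smul_set]
  constructor
  · rintro ⟨⟨u,v⟩, ⟨hu, ⟨hv0,hv1⟩⟩, rfl⟩
    simp only [Set.mem_singleton_iff] at hu
    subst hu
    refine ⟨mul_nonneg hp hv0, mul_le_mul_of_nonneg_left hv1 hp, by simp⟩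
  · rintro ⟨hx0, hx1, hy⟩
    rcases hp.eq_or_lt with rfl | hp'
    · have : q.2 = 0 := le_antisymm (by linarith) hx0
      exact ⟨(0,0), ⟨rfl, ⟨le_refl _, hR.le⟩⟩, by ext <;> simp [this, hy]⟩
    · refine ⟨(0, q.2/p), ⟨rfl, ⟨by positivity, by rw [div_le_iff₀ hp']; linarith⟩⟩, ?_⟩
      ext <;> simp [smul_eq_mul, hy]
      field_simp

lemma memSq (p R : ℝ) (hp : 0 ≤ p) (hR : 0 < R) (q : ℝ × ℝ) :
    q ∈ p • convexHull ℝ {((0:ℝ),(0:ℝ)), (R,0), (0,R), (R,R)} ↔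
      0 ≤ q.1 ∧ q.1 ≤ p*R ∧ 0 ≤ q.2 ∧ q.2 ≤ p*R := by
  rw [hullSq R hR.le, Set.mem_smul_set]
  constructor
  · rintro ⟨⟨u,v⟩, ⟨⟨hu0,hu1⟩, ⟨hv0,hv1⟩⟩, rfl⟩
    exact ⟨mul_nonneg hp hu0, mul_le_mul_of_nonneg_left hu1 hp,
      mul_nonneg hp hv0, mul_le_mul_of_nonneg_left hv1 hp⟩
  · rintro ⟨hx0, hx1, hy0, hy1⟩
    rcases hp.eq_or_lt with rfl | hp'
    · have h1 : q.1 = 0 := le_antisymm (by linarith) hx0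
      have h2 : q.2 = 0 := le_antisymm (by linarith) hy0
      exact ⟨(0,0), ⟨⟨le_refl _, hR.le⟩, ⟨le_refl _, hR.le⟩⟩, by ext <;> simp [h1, h2]⟩
    · refine ⟨(q.1/p, q.2/p), ⟨⟨by positivity, by rw [div_le_iff₀ hp']; linarith⟩,
        ⟨by positivity, by rw [div_le_iff₀ hp']; linarith⟩⟩, ?_⟩
      ext <;> simp [smul_eq_mul] <;> field_simp

lemma memTri (p R : ℝ) (hp : 0 ≤ p) (hR : 0 < R) (q : ℝ × ℝ) :
    q ∈ p • convexHull ℝ {((0:ℝ),(0:ℝ)), (R,0), (0,R)} ↔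
      0 ≤ q.1 ∧ 0 ≤ q.2 ∧ q.1 + q.2 ≤ p*R := by
  rw [hullTri R hR, Set.mem_smul_set]
  constructor
  · rintro ⟨⟨u,v⟩, ⟨hu0, hv0, huv⟩, rfl⟩
    refine ⟨mul_nonneg hp hu0, mul_nonneg hp hv0, ?_⟩
    simp only [Prod.smul_fst, Prod.smul_snd, smul_eq_mul]
    calc p*u + p*v = p*(u+v) := by ring
      _ ≤ p*R := mul_le_mul_of_nonneg_left huv hp
  · rintro ⟨hx0, hy0, hxy⟩
    rcases hp.eq_or_lt with rfl | hp'
    · have h1 : q.1 = 0 := le_antisymm (by linarith) hx0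
      have h2 : q.2 = 0 := le_antisymm (by linarith) hy0
      exact ⟨(0,0), ⟨le_refl _, le_refl _, by simpa using hR.le⟩, by ext <;> simp [h1, h2]⟩
    · refine ⟨(q.1/p, q.2/p), ⟨by positivity, by positivity, ?_⟩, ?_⟩
      · simp only
        rw [← add_div, div_le_iff₀ hp']
        linarith
      · ext <;> simp [smul_eq_mul] <;> field_simp

/-- The stability region `Γ = Σᵢ pr(Sᵢ) • Co(C(Sᵢ))` of the fixed-codebook two-user MAC
with peak power constraints is a pentagon. -/
theorem fixed_codebook_mac_stability_region_pentagon
    (R₀ p₂ p₃ p₄ p₅ : ℝ) (hR₀ : 0 < R₀)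
    (hp₂ : 0 ≤ p₂) (hp₃ : 0 ≤ p₃) (hp₄ : 0 ≤ p₄) (hp₅ : 0 ≤ p₅) :
    p₂ • convexHull ℝ {((0 : ℝ), (0 : ℝ)), (R₀, 0)} +
        p₃ • convexHull ℝ {((0 : ℝ), (0 : ℝ)), (0, R₀)} +
        p₄ • convexHull ℝ {((0 : ℝ), (0 : ℝ)), (R₀, 0), (0, R₀), (R₀, R₀)} +
        p₅ • convexHull ℝ {((0 : ℝ), (0 : ℝ)), (R₀, 0), (0, R₀)} =
      {q : ℝ × ℝ | 0 ≤ q.1 ∧ 0 ≤ q.2 ∧ q.1 ≤ (p₂ + p₄ + p₅) * R₀ ∧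
        q.2 ≤ (p₃ + p₄ + p₅) * R₀ ∧ q.1 + q.2 ≤ (p₂ + p₃ + 2 * p₄ + p₅) * R₀} := by
  ext ⟨a, b⟩
  constructor
  · rintro ⟨x, ⟨y, ⟨z, hz, w, hw, rfl⟩, v, hv, rfl⟩, u, hu, heq⟩
    obtain ⟨h1, h2, h3⟩ := (memH p₂ R₀ hp₂ hR₀ z).1 hz
    obtain ⟨h4, h5, h6⟩ := (memV p₃ R₀ hp₃ hR₀ w).1 hw
    obtain ⟨h7, h8, h9, h10⟩ := (memSq p₄ R₀ hp₄ hR₀ v).1 hv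
    obtain ⟨h11, h12, h13⟩ := (memTri p₅ R₀ hp₅ hR₀ u).1 hu
    have hA : z.1 + w.1 + v.1 + u.1 = a := by
      have := congrArg Prod.fst heq
      simpa using this
    have hB : z.2 + w.2 + v.2 + u.2 = b := by
      have := congrArg Prod.snd heq
      simpa using this
    simp only [Set.mem_setOf_eq]
    refine ⟨by linarith, by linarith, by nlinarith, by nlinarith, by nlinarith⟩
  · rintro ⟨ha0, hb0, ha, hb, hab⟩
    simp only at ha0 hb0 ha hb hab
    set a₂ := min a (p₂*R₀) with ha₂
    set b₃ := min b (p₃*R₀) with hb₃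
    set a' := a - a₂ with ha'
    set b' := b - b₃ with hb'
    set a₄ := min a' (p₄*R₀) with ha₄
    set b₄ := min b' (p₄*R₀) with hb₄
    set a₅ := a' - a₄ with ha₅
    set b₅ := b' - b₄ with hb₅
    have e2 : (0:ℝ) ≤ p₂*R₀ := by positivity
    have e3 : (0:ℝ) ≤ p₃*R₀ := by positivity
    have e4 : (0:ℝ) ≤ p₄*R₀ := by positivity
    have e5 : (0:ℝ) ≤ p₅*R₀ := by positivity
    have ea : (p₂ + p₄ + p₅) * R₀ = p₂*R₀ + p₄*R₀ + p₅*R₀ := by ring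
    have eb : (p₃ + p₄ + p₅) * R₀ = p₃*R₀ + p₄*R₀ + p₅*R₀ := by ring
    have eab : (p₂ + p₃ + 2 * p₄ + p₅) * R₀ = p₂*R₀ + p₃*R₀ + p₄*R₀ + p₄*R₀ + p₅*R₀ := by ring
    have l1 : a₂ ≤ a := min_le_left _ _
    have r1 : a₂ ≤ p₂*R₀ := min_le_right _ _
    have l2 : b₃ ≤ b := min_le_left _ _
    have r2 : b₃ ≤ p₃*R₀ := min_le_right _ _
    have l3 : a₄ ≤ a' := min_le_left _ _
    have r3 : a₄ ≤ p₄*R₀ := min_le_right _ _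
    have l4 : b₄ ≤ b' := min_le_left _ _
    have r4 : b₄ ≤ p₄*R₀ := min_le_right _ _
    have n2 : 0 ≤ a₂ := le_min ha0 e2
    have n3 : 0 ≤ b₃ := le_min hb0 e3
    have na' : 0 ≤ a' := by simp only [ha']; linarith
    have nb' : 0 ≤ b' := by simp only [hb']; linarith
    have n4a : 0 ≤ a₄ := le_min na' e4
    have n4b : 0 ≤ b₄ := le_min nb' e4
    have n5a : 0 ≤ a₅ := by simp only [ha₅]; linarith
    have n5b : 0 ≤ b₅ := by simp only [hb₅]; linarith
    have key : a₅ + b₅ ≤ p₅ * R₀ := by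
      rcases min_choice a (p₂*R₀) with c1 | c1 <;>
      rcases min_choice b (p₃*R₀) with c2 | c2 <;>
      rcases min_choice a' (p₄*R₀) with c3 | c3 <;>
      rcases min_choice b' (p₄*R₀) with c4 | c4 <;>
      · rw [← ha₂] at c1
        rw [← hb₃] at c2
        rw [← ha₄] at c3
        rw [← hb₄] at c4
        simp only [ha₅, hb₅, ha', hb'] at *
        linarith
    have hsum : ((a, b) : ℝ × ℝ) = ((a₂, 0) + (0, b₃) + (a₄, b₄)) + (a₅, b₅) := by
      ext <;> simp [ha₅, hb₅, ha', hb']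
    rw [hsum]
    refine Set.add_mem_add (Set.add_mem_add (Set.add_mem_add ?_ ?_) ?_) ?_
    · exact (memH p₂ R₀ hp₂ hR₀ _).2 ⟨n2, r1, rfl⟩
    · exact (memV p₃ R₀ hp₃ hR₀ _).2 ⟨n3, r2, rfl⟩
    · exact (memSq p₄ R₀ hp₄ hR₀ _).2 ⟨n4a, r3, n4b, r4⟩
    · exact (memTri p₅ R₀ hp₅ hR₀ _).2 ⟨n5a, n5b, key⟩
end

section
/- (Strict comparison step, equation (3) of the appendix.) Let x ≤ z ≤ y be real numbers, let P : ℝ → ℝ be continuous, strictly decreasing and positive on [x, y], let f : ℝ → ℝ be continuous and nonnegative on [x, y], and let p : ℝ → ℝ be measurable with 0 ≤ p(h) ≤ 1 for all h. If ∫_{x}^{z} p(h)·P(h)·f(h) dh = ∫_{z}^{y} (1 − p(h))·P(h)·f(h) dh and ∫_{x}^{z} p(h)·f(h) dh > 0, then ∫_{x}^{y} p(h)·f(h) dh < ∫_{z}^{y} f(h) dh. -/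
open MeasureTheory intervalIntegral

/-- Strict comparison step (equation (3) of the appendix). -/
theorem threshold_policy_strict_rate_gain
    (x z y : ℝ) (hxz : x ≤ z) (hzy : z ≤ y) (P f p : ℝ → ℝ)
    (hPc : ContinuousOn P (Set.Icc x y))
    (hPanti : StrictAntiOn P (Set.Icc x y))
    (hPpos : ∀ h ∈ Set.Icc x y, 0 < P h)
    (hfc : ContinuousOn f (Set.Icc x y))
    (hf0 : ∀ h ∈ Set.Icc x y, 0 ≤ f h)
    (hp : Measurable p) (hp01 : ∀ h : ℝ, 0 ≤ p h ∧ p h ≤ 1)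
    (hpow : ∫ h in x..z, p h * P h * f h = ∫ h in z..y, (1 - p h) * P h * f h)
    (hpos : 0 < ∫ h in x..z, p h * f h) :
    (∫ h in x..y, p h * f h) < ∫ h in z..y, f h := by
  have hxy : x ≤ y := hxz.trans hzy
  have hzmem : z ∈ Set.Icc x y := ⟨hxz, hzy⟩
  have hIxz : Set.Icc x z ⊆ Set.Icc x y := Set.Icc_subset_Icc le_rfl hzy
  have hIzy : Set.Icc z y ⊆ Set.Icc x y := Set.Icc_subset_Icc hxz le_rfl
  -- bounds on p
  have hpbdd : ∃ C, ∀ h : ℝ, ‖p h‖ ≤ C :=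
    ⟨1, fun h => abs_le.mpr ⟨by linarith [(hp01 h).1], (hp01 h).2⟩⟩
  have hqbdd : ∃ C, ∀ h : ℝ, ‖1 - p h‖ ≤ C :=
    ⟨1, fun h => abs_le.mpr ⟨by linarith [(hp01 h).2], by linarith [(hp01 h).1]⟩⟩
  -- integrabilities on Icc x y
  have hfI : IntegrableOn f (Set.Icc x y) := hfc.integrableOn_Icc
  have hPfI : IntegrableOn (fun h => P h * f h) (Set.Icc x y) := (hPc.mul hfc).integrableOn_Icc
  have hpfI : IntegrableOn (fun h => p h * f h) (Set.Icc x y) :=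
    hfI.bdd_mul hp.aestronglyMeasurable (Filter.Eventually.of_forall hpbdd.choose_spec)
  have hqfI : IntegrableOn (fun h => (1 - p h) * f h) (Set.Icc x y) :=
    hfI.bdd_mul (measurable_const.sub hp).aestronglyMeasurable (Filter.Eventually.of_forall hqbdd.choose_spec)
  have hpPfI : IntegrableOn (fun h => p h * P h * f h) (Set.Icc x y) := by
    have := hPfI.bdd_mul hp.aestronglyMeasurable (Filter.Eventually.of_forall hpbdd.choose_spec)
    exact this.congr (Filter.Eventually.of_forall fun h => by ring)
  have hqPfI : IntegrableOn (fun h => (1 - p h) * P h * f h) (Set.Icc x y) := by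
    have := hPfI.bdd_mul (measurable_const.sub hp).aestronglyMeasurable (Filter.Eventually.of_forall hqbdd.choose_spec)
    exact this.congr (Filter.Eventually.of_forall fun h => by simp only [Pi.sub_apply]; ring)
  -- restrictions
  have hpf1 : IntegrableOn (fun h => p h * f h) (Set.Ioc x z) :=
    hpfI.mono_set ((Set.Ioc_subset_Icc_self).trans hIxz)
  have hpf2 : IntegrableOn (fun h => p h * f h) (Set.Ioc z y) :=
    hpfI.mono_set ((Set.Ioc_subset_Icc_self).trans hIzy)
  have hqf2 : IntegrableOn (fun h => (1 - p h) * f h) (Set.Ioc z y) :=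
    hqfI.mono_set ((Set.Ioc_subset_Icc_self).trans hIzy)
  have hf2 : IntegrableOn f (Set.Ioc z y) :=
    hfI.mono_set ((Set.Ioc_subset_Icc_self).trans hIzy)
  have hpPf1 : IntegrableOn (fun h => p h * P h * f h) (Set.Ioc x z) :=
    hpPfI.mono_set ((Set.Ioc_subset_Icc_self).trans hIxz)
  have hqPf2 : IntegrableOn (fun h => (1 - p h) * P h * f h) (Set.Ioc z y) :=
    hqPfI.mono_set ((Set.Ioc_subset_Icc_self).trans hIzy)
  -- rewrite interval integrals as set integrals
  rw [integral_of_le hxz] at hpos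
  rw [integral_of_le hxz, integral_of_le hzy] at hpow
  rw [integral_of_le hzy]
  -- split the LHS
  have hsplit : (∫ h in x..y, p h * f h)
      = (∫ h in Set.Ioc x z, p h * f h) + ∫ h in Set.Ioc z y, p h * f h := by
    rw [← integral_add_adjacent_intervals (b := z)
        ((intervalIntegrable_iff_integrableOn_Ioc_of_le hxz).2 hpf1) ((intervalIntegrable_iff_integrableOn_Ioc_of_le hzy).2 hpf2),
      integral_of_le hxz, integral_of_le hzy]
  -- P z ≤ P h on Ioc x z
  have hPge : ∀ h ∈ Set.Ioc x z, P z ≤ P h := by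
    intro h hh
    have hmem : h ∈ Set.Icc x y := hIxz ⟨hh.1.le, hh.2⟩
    rcases eq_or_lt_of_le hh.2 with rfl | hlt
    · exact le_rfl
    · exact (hPanti hmem hzmem hlt).le
  have hPle : ∀ h ∈ Set.Ioc z y, P h ≤ P z := by
    intro h hh
    have hmem : h ∈ Set.Icc x y := hIzy ⟨hh.1.le, hh.2⟩
    exact (hPanti hzmem hmem hh.1).le
  have hf0' : ∀ h ∈ Set.Ioc x z, 0 ≤ p h * f h := fun h hh =>
    mul_nonneg (hp01 h).1 (hf0 h (hIxz ⟨hh.1.le, hh.2⟩))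
  -- Step A: strict inequality on the left piece
  set W : ℝ → ℝ := fun h => (P h - P z) * (p h * f h) with hW
  have hWI : IntegrableOn W (Set.Ioc x z) := by
    have h1 : IntegrableOn (fun h => P h * (p h * f h)) (Set.Ioc x z) :=
      hpPf1.congr (Filter.Eventually.of_forall fun h => by ring)
    have h2 : IntegrableOn (fun h => P z * (p h * f h)) (Set.Ioc x z) := hpf1.const_mul _
    exact (h1.sub h2).congr (Filter.Eventually.of_forall fun h => by simp [hW]; ring)
  have hWnn : 0 ≤ᶠ[ae (volume.restrict (Set.Ioc x z))] W := by
    refine (ae_restrict_iff' measurableSet_Ioc).2 (Filter.Eventually.of_forall fun h hh => ?_)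
    exact mul_nonneg (sub_nonneg.2 (hPge h hh)) (hf0' h hh)
  -- positive support from hpos
  have hgnn : 0 ≤ᶠ[ae (volume.restrict (Set.Ioc x z))] (fun h => p h * f h) := by
    refine (ae_restrict_iff' measurableSet_Ioc).2 (Filter.Eventually.of_forall fun h hh => hf0' h hh)
  have hsupp : 0 < volume (Function.support (fun h => p h * f h) ∩ Set.Ioc x z) :=
    (setIntegral_pos_iff_support_of_nonneg_ae hgnn hpf1).1 hpos
  have hsuppW : 0 < volume (Function.support W ∩ Set.Ioc x z) := by
    have hsub : (Function.support (fun h => p h * f h) ∩ Set.Ioc x z) \ {z}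
        ⊆ Function.support W ∩ Set.Ioc x z := by
      rintro h ⟨⟨hg, hh⟩, hz⟩
      refine ⟨?_, hh⟩
      have hlt : h < z := lt_of_le_of_ne hh.2 (by simpa using hz)
      have hPlt : P z < P h := hPanti (hIxz ⟨hh.1.le, hh.2⟩) hzmem hlt
      simp only [Function.mem_support, hW]
      exact mul_ne_zero (by linarith) hg
    calc 0 < volume ((Function.support (fun h => p h * f h) ∩ Set.Ioc x z) \ {z}) := by
          rw [measure_diff_null (measure_singleton z)]; exact hsupp
      _ ≤ _ := measure_mono hsub
  have hWpos : 0 < ∫ h in Set.Ioc x z, W h :=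
    (setIntegral_pos_iff_support_of_nonneg_ae hWnn hWI).2 hsuppW
  have hA : P z * (∫ h in Set.Ioc x z, p h * f h) < ∫ h in Set.Ioc x z, p h * P h * f h := by
    have h1 : IntegrableOn (fun h => P z * (p h * f h)) (Set.Ioc x z) := hpf1.const_mul _
    have heq : ∫ h in Set.Ioc x z, W h
        = (∫ h in Set.Ioc x z, p h * P h * f h) - ∫ h in Set.Ioc x z, P z * (p h * f h) := by
      rw [← integral_sub hpPf1 h1]
      exact integral_congr_ae (Filter.Eventually.of_forall fun h => by simp [hW]; ring)
    rw [MeasureTheory.integral_const_mul] at heq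
    linarith [hWpos, heq]
  -- Step B: on the right piece
  have hB : (∫ h in Set.Ioc z y, (1 - p h) * P h * f h)
      ≤ P z * ∫ h in Set.Ioc z y, (1 - p h) * f h := by
    rw [← MeasureTheory.integral_const_mul]
    refine setIntegral_mono_on hqPf2 (hqf2.const_mul _) measurableSet_Ioc fun h hh => ?_
    have hq0 : 0 ≤ 1 - p h := by linarith [(hp01 h).2]
    have hf0h : 0 ≤ f h := hf0 h (hIzy ⟨hh.1.le, hh.2⟩)
    nlinarith [hPle h hh, mul_nonneg hq0 hf0h]
  have hPz : 0 < P z := hPpos z hzmem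
  -- combine: ∫ pf on Ioc x z < ∫ (1-p) f on Ioc z y
  have hkey : (∫ h in Set.Ioc x z, p h * f h) < ∫ h in Set.Ioc z y, (1 - p h) * f h := by
    have := hpow ▸ hA
    have h2 := lt_of_lt_of_le this hB
    exact lt_of_mul_lt_mul_left (by linarith) hPz.le
  -- finish
  have hsum : (∫ h in Set.Ioc z y, (1 - p h) * f h) + ∫ h in Set.Ioc z y, p h * f h
      = ∫ h in Set.Ioc z y, f h := by
    rw [← integral_add hqf2 hpf2]
    exact integral_congr_ae (Filter.Eventually.of_forall fun h => by ring)
  rw [hsplit]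
  linarith
end

section
/- (Lemma 1, point-to-point case: randomized policies are strictly suboptimal.) Let x < y be real numbers, let P : ℝ → ℝ be continuous, strictly decreasing and positive on [x, y], let f : ℝ → ℝ be continuous and strictly positive on [x, y], and let p : ℝ → ℝ be measurable with 0 ≤ p(h) ≤ 1 for all h. Suppose there exists ε > 0 such that the set { h ∈ [x, y] : ε ≤ p(h) ≤ 1 − ε } has positive Lebesgue measure. Then there exists z ∈ [x, y] such that ∫_{z}^{y} P(h)·f(h) dh = ∫_{x}^{y} p(h)·P(h)·f(h) dh and ∫_{z}^{y} f(h) dh > ∫_{x}^{y} p(h)·f(h) dh. That is, the threshold policy that transmits exactly when h ∈ [z, y] consumes the same average power as p on [x, y] but achieves a strictly greater average rate, so an optimal rate allocation policy maps each channel state to a unique rate (transmit or not), i.e., takes values in {0, 1} almost everywhere. -/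
open MeasureTheory intervalIntegral

private lemma aux_int {x y : ℝ} {F w : ℝ → ℝ} (hF : ContinuousOn F (Set.Icc x y))
    (hw : AEStronglyMeasurable w (volume.restrict (Set.Ioc x y)))
    {C : ℝ} (hwb : ∀ h, |w h| ≤ C) :
    IntegrableOn (fun h => w h * F h) (Set.Ioc x y) volume := by
  obtain ⟨M, hM⟩ := isCompact_Icc.exists_bound_of_continuousOn hF
  refine ⟨hw.mul ((hF.aestronglyMeasurable measurableSet_Icc).mono_measure
      (Measure.restrict_mono Set.Ioc_subset_Icc_self le_rfl)), ?_⟩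
  apply HasFiniteIntegral.restrict_of_bounded (C := C * M) measure_Ioc_lt_top
  filter_upwards [ae_restrict_mem measurableSet_Ioc] with h hh
  have h1 := hM h (Set.Ioc_subset_Icc_self hh)
  have h2 := hwb h
  have h0 : (0:ℝ) ≤ C := le_trans (abs_nonneg _) h2
  calc ‖w h * F h‖ = |w h| * ‖F h‖ := by rw [norm_mul]; rfl
    _ ≤ C * M := mul_le_mul h2 h1 (norm_nonneg _) h0

/-- Lemma 1, point-to-point case: a genuinely randomized transmission policy `p` is
strictly suboptimal; there is a threshold policy (transmit exactly when `h ∈ [z, y]`)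
consuming the same average power but achieving a strictly greater average rate. -/
theorem randomized_policy_strictly_suboptimal
    (x y : ℝ) (hxy : x < y) (P f p : ℝ → ℝ)
    (hPc : ContinuousOn P (Set.Icc x y))
    (hPanti : StrictAntiOn P (Set.Icc x y))
    (hPpos : ∀ h ∈ Set.Icc x y, 0 < P h)
    (hfc : ContinuousOn f (Set.Icc x y))
    (hfpos : ∀ h ∈ Set.Icc x y, 0 < f h)
    (hp : Measurable p) (hp01 : ∀ h : ℝ, 0 ≤ p h ∧ p h ≤ 1)
    (hrand : ∃ ε > (0 : ℝ),
      0 < volume {h ∈ Set.Icc x y | ε ≤ p h ∧ p h ≤ 1 - ε}) :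
    ∃ z ∈ Set.Icc x y,
      (∫ h in z..y, P h * f h) = (∫ h in x..y, p h * P h * f h) ∧
        (∫ h in x..y, p h * f h) < ∫ h in z..y, f h := by
  obtain ⟨ε, hε, hA⟩ := hrand
  set A := {h ∈ Set.Icc x y | ε ≤ p h ∧ p h ≤ 1 - ε} with hAdef
  have hxy' : x ≤ y := hxy.le
  have huIcc : Set.uIcc x y = Set.Icc x y := Set.uIcc_of_le hxy'
  have hFc : ContinuousOn (fun h => P h * f h) (Set.Icc x y) := hPc.mul hfc
  have hFint : ∀ a b : ℝ, a ∈ Set.Icc x y → b ∈ Set.Icc x y →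
      IntervalIntegrable (fun h => P h * f h) volume a b := by
    intro a b ha hb
    rw [← huIcc] at ha hb
    have hs : Set.uIcc a b ⊆ Set.Icc x y := huIcc ▸ Set.uIcc_subset_uIcc ha hb
    exact (hFc.mono hs).intervalIntegrable
  have hpmeas : AEStronglyMeasurable p (volume.restrict (Set.Ioc x y)) :=
    hp.aestronglyMeasurable.restrict
  have hpb : ∀ h, |p h| ≤ 1 := fun h => abs_le.mpr ⟨by linarith [(hp01 h).1], (hp01 h).2⟩
  have hpF : IntegrableOn (fun h => p h * (P h * f h)) (Set.Ioc x y) volume :=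
    aux_int hFc hpmeas hpb
  have hpf : IntegrableOn (fun h => p h * f h) (Set.Ioc x y) volume :=
    aux_int hfc hpmeas hpb
  have hpFiv : IntervalIntegrable (fun h => p h * (P h * f h)) volume x y := by
    rw [intervalIntegrable_iff_integrableOn_Ioc_of_le hxy']; exact hpF
  set T := ∫ h in x..y, p h * P h * f h with hT
  have hTalt : T = ∫ h in x..y, p h * (P h * f h) := by
    rw [hT]; simp only [mul_assoc]
  have hT0 : 0 ≤ T := by
    apply intervalIntegral.integral_nonneg hxy'
    intro u hu
    have := (hp01 u).1
    have := (hPpos u hu).le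
    have := (hfpos u hu).le
    positivity
  have hT1 : T ≤ ∫ h in x..y, P h * f h := by
    rw [hTalt]
    apply intervalIntegral.integral_mono_on hxy' hpFiv
      (hFint x y ⟨le_refl x, hxy'⟩ ⟨hxy', le_refl y⟩)
    intro u hu
    have h2 : 0 ≤ P u * f u := mul_nonneg (hPpos u hu).le (hfpos u hu).le
    exact mul_le_of_le_one_left h2 (hp01 u).2
  have hGcont : ContinuousOn (fun z => ∫ h in z..y, P h * f h) (Set.Icc x y) := by
    rw [← huIcc]
    exact intervalIntegral.continuousOn_primitive_interval_left
      (by rw [huIcc]; exact hFc.integrableOn_Icc)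
  obtain ⟨z, hz, hGz⟩ : ∃ z ∈ Set.Icc x y, (∫ h in z..y, P h * f h) = T := by
    have himg := intermediate_value_Icc' hxy' hGcont
    have hmem : T ∈ Set.Icc ((fun z => ∫ h in z..y, P h * f h) y)
        ((fun z => ∫ h in z..y, P h * f h) x) := by
      simp only [intervalIntegral.integral_same]
      exact ⟨hT0, hT1⟩
    obtain ⟨z, hz, hgz⟩ := himg hmem
    exact ⟨z, hz, hgz⟩
  refine ⟨z, hz, hGz, ?_⟩
  have hzx : x ≤ z := hz.1
  have hzy : z ≤ y := hz.2
  set q : ℝ → ℝ := fun h => (Set.Ioc z y).indicator (fun _ => (1:ℝ)) h - p h with hqdef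
  set g : ℝ → ℝ := fun h => q h * ((P z - P h) * f h) with hgdef
  have hqmeas : AEStronglyMeasurable q (volume.restrict (Set.Ioc x y)) :=
    ((measurable_const.indicator measurableSet_Ioc).sub hp).aestronglyMeasurable.restrict
  have hqb : ∀ h, |q h| ≤ 2 := by
    intro h
    have h1 := (hp01 h).1
    have h2 := (hp01 h).2
    by_cases hh : h ∈ Set.Ioc z y
    · simp only [hqdef, Set.indicator_of_mem hh]
      rw [abs_le]; constructor <;> linarith
    · simp only [hqdef, Set.indicator_of_notMem hh]
      rw [abs_le]; constructor <;> linarith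
  have hgint : IntegrableOn g (Set.Ioc x y) volume :=
    aux_int ((continuousOn_const.sub hPc).mul hfc) hqmeas hqb
  have hqf : IntegrableOn (fun h => q h * f h) (Set.Ioc x y) volume :=
    aux_int hfc hqmeas hqb
  have hqF : IntegrableOn (fun h => q h * (P h * f h)) (Set.Ioc x y) volume :=
    aux_int hFc hqmeas hqb
  have hfI : IntegrableOn f (Set.Ioc x y) volume :=
    hfc.integrableOn_Icc.mono_set Set.Ioc_subset_Icc_self
  have hFI : IntegrableOn (fun h => P h * f h) (Set.Ioc x y) volume :=
    hFc.integrableOn_Icc.mono_set Set.Ioc_subset_Icc_self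
  have hindf : IntegrableOn ((Set.Ioc z y).indicator f) (Set.Ioc x y) volume :=
    hfI.indicator measurableSet_Ioc
  have hindF : IntegrableOn ((Set.Ioc z y).indicator (fun h => P h * f h)) (Set.Ioc x y) volume :=
    hFI.indicator measurableSet_Ioc
  have hIocsub : Set.Ioc x y ∩ Set.Ioc z y = Set.Ioc z y :=
    Set.inter_eq_right.mpr (Set.Ioc_subset_Ioc_left hzx)
  have hqf_eq : (∫ h in Set.Ioc x y, q h * f h)
      = (∫ h in Set.Ioc z y, f h) - ∫ h in Set.Ioc x y, p h * f h := by
    have he : (fun h => q h * f h)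
        = fun h => (Set.Ioc z y).indicator f h - p h * f h := by
      funext h
      by_cases hh : h ∈ Set.Ioc z y <;>
        simp [hqdef, Set.indicator_of_mem, Set.indicator_of_notMem, hh] <;> ring
    rw [he, integral_sub hindf hpf, setIntegral_indicator measurableSet_Ioc, hIocsub]
  have hqF_eq : (∫ h in Set.Ioc x y, q h * (P h * f h))
      = (∫ h in Set.Ioc z y, P h * f h) - ∫ h in Set.Ioc x y, p h * (P h * f h) := by
    have he : (fun h => q h * (P h * f h))
        = fun h => (Set.Ioc z y).indicator (fun h => P h * f h) h - p h * (P h * f h) := by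
      funext h
      by_cases hh : h ∈ Set.Ioc z y <;>
        simp [hqdef, Set.indicator_of_mem, Set.indicator_of_notMem, hh] <;> ring
    rw [he, integral_sub hindF hpF, setIntegral_indicator measurableSet_Ioc, hIocsub]
  have hpow : (∫ h in Set.Ioc z y, P h * f h) = ∫ h in Set.Ioc x y, p h * (P h * f h) := by
    rw [← integral_of_le hzy, ← integral_of_le hxy', hGz, hTalt]
  have hgsplit : (∫ h in Set.Ioc x y, g h)
      = P z * (∫ h in Set.Ioc x y, q h * f h) - ∫ h in Set.Ioc x y, q h * (P h * f h) := by
    have he : g = fun h => P z * (q h * f h) - q h * (P h * f h) := by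
      funext h; simp only [hgdef]; ring
    rw [he, integral_sub (hqf.const_mul _) hqF, MeasureTheory.integral_const_mul]
  have hg_nonneg : 0 ≤ᵐ[volume.restrict (Set.Ioc x y)] g := by
    filter_upwards [ae_restrict_mem measurableSet_Ioc] with h hh
    have hhI : h ∈ Set.Icc x y := Set.Ioc_subset_Icc_self hh
    by_cases hzh : h ∈ Set.Ioc z y
    · have h1 : 0 ≤ 1 - p h := by linarith [(hp01 h).2]
      have h2 : P h ≤ P z := (hPanti hz hhI hzh.1).le
      have h3 := (hfpos h hhI).le
      simp only [hgdef, hqdef, Set.indicator_of_mem hzh]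
      exact mul_nonneg h1 (mul_nonneg (by linarith) h3)
    · have hhz : h ≤ z := by
        by_contra hc
        exact hzh ⟨lt_of_not_ge hc, hh.2⟩
      have h2 : P z ≤ P h := by
        rcases eq_or_lt_of_le hhz with he | hl
        · rw [he]
        · exact (hPanti hhI hz hl).le
      have h3 := (hp01 h).1
      have h4 := (hfpos h hhI).le
      simp only [hgdef, hqdef, Set.indicator_of_notMem hzh]
      have he : (0 - p h) * ((P z - P h) * f h) = p h * ((P h - P z) * f h) := by ring
      rw [he]
      exact mul_nonneg h3 (mul_nonneg (by linarith) h4)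
  have hAmeas : MeasurableSet A := by
    have he : A = Set.Icc x y ∩ (p ⁻¹' (Set.Icc ε (1 - ε))) := by
      ext h; simp [hAdef, Set.mem_Icc, and_assoc]
    rw [he]; exact measurableSet_Icc.inter (hp measurableSet_Icc)
  have hA'sub : A ⊆ ((A ∩ Set.Ioc x y) \ {z}) ∪ {x, z} := by
    intro h hh
    by_cases h1 : h = x
    · exact Or.inr (by simp [h1])
    by_cases h2 : h = z
    · exact Or.inr (by simp [h2])
    exact Or.inl ⟨⟨hh, lt_of_le_of_ne hh.1.1 (Ne.symm h1), hh.1.2⟩, h2⟩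
  have hA'pos : 0 < volume ((A ∩ Set.Ioc x y) \ {z}) := by
    by_contra hcon
    have h0 : volume ((A ∩ Set.Ioc x y) \ {z}) = 0 := by
      simpa using (not_lt.mp hcon)
    have hle : volume A ≤ volume ((A ∩ Set.Ioc x y) \ {z}) + volume ({x, z} : Set ℝ) :=
      le_trans (measure_mono hA'sub) (measure_union_le _ _)
    rw [h0, ((Set.finite_singleton z).insert x).measure_zero volume] at hle
    simp only [zero_add, nonpos_iff_eq_zero] at hle
    exact absurd hle (ne_of_gt hA)
  have hgpos : ∀ h ∈ (A ∩ Set.Ioc x y) \ {z}, 0 < g h := by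
    rintro h ⟨⟨hhA, hhIoc⟩, hhz⟩
    have hhz' : h ≠ z := hhz
    have hhIcc : h ∈ Set.Icc x y := hhA.1
    have hε1 : ε ≤ p h := hhA.2.1
    have hε2 : p h ≤ 1 - ε := hhA.2.2
    have hfh := hfpos h hhIcc
    rcases lt_or_gt_of_ne hhz' with hl | hg'
    · -- h < z : indicator is 0
      have hnot : h ∉ Set.Ioc z y := fun hc => absurd hc.1 (not_lt.mpr hl.le)
      have hP : P z < P h := hPanti hhIcc hz hl
      simp only [hgdef, hqdef, Set.indicator_of_notMem hnot]
      have hq1 : 0 - p h < 0 := by linarith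
      have hq2 : (P z - P h) * f h < 0 := mul_neg_of_neg_of_pos (by linarith) hfh
      exact mul_pos_of_neg_of_neg hq1 hq2
    · -- z < h
      have hin : h ∈ Set.Ioc z y := ⟨hg', hhIcc.2⟩
      have hP : P h < P z := hPanti hz hhIcc hg'
      simp only [hgdef, hqdef, Set.indicator_of_mem hin]
      have hq1 : 0 < 1 - p h := by linarith
      exact mul_pos hq1 (mul_pos (by linarith) hfh)
  have hsupp : 0 < (volume.restrict (Set.Ioc x y)) (Function.support g) := by
    have hmeas' : MeasurableSet ((A ∩ Set.Ioc x y) \ {z}) :=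
      (hAmeas.inter measurableSet_Ioc).diff (measurableSet_singleton z)
    have hsub2 : (A ∩ Set.Ioc x y) \ {z} ⊆ Function.support g := fun h hh => (hgpos h hh).ne'
    calc 0 < volume ((A ∩ Set.Ioc x y) \ {z}) := hA'pos
      _ = (volume.restrict (Set.Ioc x y)) ((A ∩ Set.Ioc x y) \ {z}) := by
          rw [Measure.restrict_apply hmeas']
          congr 1
          exact (Set.inter_eq_left.mpr (fun h hh => hh.1.2)).symm
      _ ≤ (volume.restrict (Set.Ioc x y)) (Function.support g) := measure_mono hsub2
  have hpos : 0 < ∫ h in Set.Ioc x y, g h :=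
    (integral_pos_iff_support_of_nonneg_ae hg_nonneg hgint).mpr hsupp
  have hfinal : (∫ h in Set.Ioc x y, g h)
      = P z * ((∫ h in Set.Ioc z y, f h) - ∫ h in Set.Ioc x y, p h * f h) := by
    rw [hgsplit, hqf_eq, hqF_eq, hpow]; ring
  have hPz : 0 < P z := hPpos z hz
  rw [hfinal] at hpos
  have hD : 0 < (∫ h in Set.Ioc z y, f h) - ∫ h in Set.Ioc x y, p h * f h := by
    by_contra hc
    push_neg at hc
    nlinarith
  rw [integral_of_le hxy', integral_of_le hzy]
  linarith
end
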